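/- Let A be a finite group acting by automorphisms on a finite group G such that the action of A on G is good. Let p be a prime dividing |A|, let B be a p-subgroup of A, and suppose G is p-solvable. Then [G,B] is a p′-group, i.e., p does not divide |[G,B]|. -/

import Mathlib

/-!
Induct on `|G|`. A nontrivial `p`-solvable group has a nontrivial normal subgroup that is a
`p`-group or a `p'`-group, and the join `M` of its `A`-translates is an `A`-invariant one of the
same kind. Goodness passes to `G/M`, so by induction `[G,B]M/M = [G/M,B]` is a `p'`-group and it
remains to see that `p ∤ |M ∩ [G,B]|`; this is clear when `M` is a `p'`-group.

When `M` is a `p`-group: goodness gives `[X,B] = [[X,B],B]` for every `B`-invariant `X`, and for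
a `p`-group `X` this forces `[X,B] = 1` because `X ⋊ B` is nilpotent. Hence `B` centralizes `M`,
so `[G,B]` centralizes `M`, and `D = M ∩ [G,B]` is a central normal Sylow subgroup of `[G,B]`.
Its Schur–Zassenhaus complement `H` consists of the `p'`-elements of `[G,B]`, so it is
`B`-invariant and contains every commutator `k⁻¹ (b • k)`; thus `[G,B] = [[G,B],B] ≤ H` and
`D = 1`.
-/

open scoped Pointwise

section GoodActionDefs

variable {A G : Type*}

/-- The subgroup `[H,B]` generated by commutators `h⁻¹ · (b • h)` with `h ∈ H`, `b ∈ B`,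
for an action `φ : A →* MulAut G`. -/
def actCommutator [Group A] [Group G] (φ : A →* MulAut G) (H : Subgroup G) (B : Subgroup A) :
    Subgroup G :=
  Subgroup.closure {x | ∃ h ∈ H, ∃ b ∈ B, x = h⁻¹ * φ b h}

/-- The subgroup `C_G(B)` of elements of `G` fixed by every element of `B`. -/
def actFixed [Group A] [Group G] (φ : A →* MulAut G) (B : Subgroup A) : Subgroup G where
  carrier := {g | ∀ b ∈ B, φ b g = g}
  one_mem' := fun b _ => map_one (φ b)
  mul_mem' := fun hx hy b hb => by rw [map_mul, hx b hb, hy b hb]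
  inv_mem' := fun hx b hb => by rw [map_inv, hx b hb]

/-- `C_H(B) = H ⊓ C_G(B)`. -/
def actCentralizerIn [Group A] [Group G] (φ : A →* MulAut G) (H : Subgroup G) (B : Subgroup A) :
    Subgroup G :=
  H ⊓ actFixed φ B

/-- `H` is a `B`-invariant subgroup of `G`. -/
def ActInvariant [Group A] [Group G] (φ : A →* MulAut G) (B : Subgroup A) (H : Subgroup G) : Prop :=
  ∀ b ∈ B, ∀ h ∈ H, φ b h ∈ H

/-- The action of `A` on `G` given by `φ` is *good* if `H = [H,B]·C_H(B)` for every subgroup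
`B` of `A` and every `B`-invariant subgroup `H` of `G`. -/
def IsGoodAction [Group A] [Group G] (φ : A →* MulAut G) : Prop :=
  ∀ (B : Subgroup A) (H : Subgroup G), ActInvariant φ B H →
    (H : Set G) = (actCommutator φ H B : Set G) * (actCentralizerIn φ H B : Set G)

end GoodActionDefs

/-- `G` is `p`-solvable: it has a normal series each of whose quotients is either a
`p`-group or a `p'`-group. -/
def IsPSolvableGroup (p : ℕ) (G : Type*) [Group G] : Prop :=
  ∃ n : ℕ, ∃ s : Fin (n + 1) → Subgroup G,
    s 0 = ⊥ ∧ s (Fin.last n) = ⊤ ∧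
    (∀ i, (s i).Normal) ∧
    (∀ i : Fin n, s i.castSucc ≤ s i.succ) ∧
    (∀ i : Fin n,
      (∃ k : ℕ, (s i.castSucc).relIndex (s i.succ) = p ^ k) ∨
        ¬ p ∣ (s i.castSucc).relIndex (s i.succ))

section ActCommutator

variable {A G : Type*} [Group A] [Group G] {φ : A →* MulAut G} {B : Subgroup A}
  {H K : Subgroup G}

lemma inv_mul_apply_mem_actCommutator {h : G} {b : A} (hh : h ∈ H) (hb : b ∈ B) :
    h⁻¹ * φ b h ∈ actCommutator φ H B :=
  Subgroup.subset_closure ⟨h, hh, b, hb, rfl⟩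

lemma actCommutator_le (hinv : ActInvariant φ B H) : actCommutator φ H B ≤ H :=
  (Subgroup.closure_le _).2 <| by
    rintro _ ⟨h, hh, b, hb, rfl⟩
    exact mul_mem (inv_mem hh) (hinv b hb h hh)

lemma actCommutator_mono (hHK : H ≤ K) : actCommutator φ H B ≤ actCommutator φ K B :=
  Subgroup.closure_mono <| by
    rintro _ ⟨h, hh, b, hb, rfl⟩
    exact ⟨h, hHK hh, b, hb, rfl⟩

lemma actCommutator_eq_bot_iff : actCommutator φ H B = ⊥ ↔ H ≤ actFixed φ B := by
  refine Subgroup.closure_eq_bot_iff.trans ⟨fun h x hx b hb => ?_, ?_⟩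
  · exact (inv_mul_eq_one.1 (h ⟨x, hx, b, hb, rfl⟩)).symm
  · rintro hH _ ⟨h, hh, b, hb, rfl⟩
    simp [hH hh b hb]

lemma actInvariant_actCommutator (hinv : ActInvariant φ B H) :
    ActInvariant φ B (actCommutator φ H B) := by
  intro b hb x hx
  suffices (actCommutator φ H B).map (φ b).toMonoidHom ≤ actCommutator φ H B from
    this ⟨x, hx, rfl⟩
  rw [actCommutator, MonoidHom.map_closure, Subgroup.closure_le]
  rintro _ ⟨_, ⟨h, hh, c, hc, rfl⟩, rfl⟩
  have hconj : φ b (h⁻¹ * φ c h) = (φ b h)⁻¹ * φ (b * c * b⁻¹) (φ b h) := by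
    simp [MulAut.mul_apply]
  rw [MulEquiv.coe_toMonoidHom, hconj]
  exact inv_mul_apply_mem_actCommutator (hinv b hb h hh)
    (mul_mem (mul_mem hb hc) (inv_mem hb))

lemma conj_mem_actCommutator {c x : G} (hc : c ∈ actCentralizerIn φ H B)
    (hx : x ∈ actCommutator φ H B) : c⁻¹ * x * c ∈ actCommutator φ H B := by
  suffices (actCommutator φ H B).map (MulAut.conj c⁻¹).toMonoidHom ≤ actCommutator φ H B from
    by simpa using this ⟨x, hx, rfl⟩
  rw [actCommutator, MonoidHom.map_closure, Subgroup.closure_le]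
  rintro _ ⟨_, ⟨h, hh, b, hb, rfl⟩, rfl⟩
  have hconj : c⁻¹ * (h⁻¹ * φ b h) * c⁻¹⁻¹ = (h * c)⁻¹ * φ b (h * c) := by
    rw [map_mul, hc.2 b hb]; group
  rw [MulEquiv.coe_toMonoidHom, MulAut.conj_apply, hconj]
  exact inv_mul_apply_mem_actCommutator (mul_mem hh hc.1) hb

lemma IsGoodAction.actCommutator_actCommutator (hgood : IsGoodAction φ)
    (hinv : ActInvariant φ B H) :
    actCommutator φ (actCommutator φ H B) B = actCommutator φ H B := by
  refine le_antisymm (actCommutator_mono (actCommutator_le hinv))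
    ((Subgroup.closure_le _).2 ?_)
  rintro _ ⟨h, hh, b, hb, rfl⟩
  obtain ⟨y, hy, c, hc, rfl⟩ : h ∈ (actCommutator φ H B : Set G) * actCentralizerIn φ H B :=
    hgood B H hinv ▸ hh
  have hshift : (y * c)⁻¹ * φ b (y * c) = (c⁻¹ * y * c)⁻¹ * φ b (c⁻¹ * y * c) := by
    rw [map_mul, map_mul, map_mul, map_inv, hc.2 b hb]; group
  rw [hshift]
  exact inv_mul_apply_mem_actCommutator (conj_mem_actCommutator hc hy) hb

lemma actCommutator_top_le_centralizer {M : Subgroup G} [M.Normal] (hM : M ≤ actFixed φ B) :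
    actCommutator φ ⊤ B ≤ Subgroup.centralizer M :=
  (Subgroup.closure_le _).2 <| by
    rintro _ ⟨g, -, b, hb, rfl⟩ m hm
    have hgm : φ b (g * m * g⁻¹) = g * m * g⁻¹ := hM (‹M.Normal›.conj_mem m hm g) b hb
    rw [map_mul, map_mul, map_inv, hM hm b hb] at hgm
    calc m * (g⁻¹ * φ b g) = g⁻¹ * (g * m * g⁻¹) * φ b g := by group
      _ = g⁻¹ * (φ b g * m * (φ b g)⁻¹) * φ b g := by rw [hgm]
      _ = g⁻¹ * φ b g * m := by group

end ActCommutator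

section Equivariant

variable {A G G' : Type*} [Group A] [Group G] [Group G'] {φ : A →* MulAut G}
  {ψ : A →* MulAut G'} {f : G →* G'}

lemma map_actCommutator (hf : ∀ a x, f (φ a x) = ψ a (f x)) (H : Subgroup G) (B : Subgroup A) :
    (actCommutator φ H B).map f = actCommutator ψ (H.map f) B := by
  rw [actCommutator, MonoidHom.map_closure, actCommutator]
  congr 1
  ext y
  constructor
  · rintro ⟨_, ⟨h, hh, b, hb, rfl⟩, rfl⟩
    exact ⟨f h, ⟨h, hh, rfl⟩, b, hb, by simp [hf]⟩
  · rintro ⟨_, ⟨h, hh, rfl⟩, b, hb, rfl⟩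
    exact ⟨_, ⟨h, hh, b, hb, rfl⟩, by simp [hf]⟩

lemma IsGoodAction.of_surjective (hf : ∀ a x, f (φ a x) = ψ a (f x))
    (hsurj : Function.Surjective f) (hgood : IsGoodAction φ) : IsGoodAction ψ := by
  intro B H' hinv'
  set H := H'.comap f
  have hinv : ActInvariant φ B H := fun b hb h hh => by
    simpa [H, hf] using hinv' b hb _ hh
  have hH : H.map f = H' := Subgroup.map_comap_eq_self_of_surjective hsurj H'
  refine Set.Subset.antisymm ?_ ?_
  · calc (H' : Set G') = f '' H := by rw [← Subgroup.coe_map, hH]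
      _ = f '' (actCommutator φ H B) * f '' (actCentralizerIn φ H B) := by
        rw [hgood B H hinv, Set.image_mul]
      _ ⊆ actCommutator ψ H' B * actCentralizerIn ψ H' B := by
        refine Set.mul_subset_mul (by rw [← Subgroup.coe_map, map_actCommutator hf, hH]) ?_
        rintro _ ⟨x, ⟨hx, hfix⟩, rfl⟩
        exact ⟨hx, fun b hb => by rw [← hf, hfix b hb]⟩
  · rintro _ ⟨y, hy, c, hc, rfl⟩
    exact mul_mem (actCommutator_le hinv' hy) hc.1

end Equivariant

section Quotient

variable {A G : Type*} [Group A] [Group G] {φ : A →* MulAut G} {M : Subgroup G}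

lemma map_eq_of_actInvariant_top (hM : ActInvariant φ ⊤ M) (a : A) :
    M.map (φ a).toMonoidHom = M := by
  refine le_antisymm (Subgroup.map_le_iff_le_comap.2 fun x hx => hM a trivial x hx)
    fun x hx => ⟨φ a⁻¹ x, hM a⁻¹ trivial x hx, ?_⟩
  rw [MulEquiv.coe_toMonoidHom, ← MulAut.mul_apply, ← map_mul, mul_inv_cancel, map_one,
    MulAut.one_apply]

variable [M.Normal]

def quotientAction (hM : ActInvariant φ ⊤ M) : A →* MulAut (G ⧸ M) where
  toFun a := QuotientGroup.congr M M (φ a) (map_eq_of_actInvariant_top hM a)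
  map_one' := by
    ext x
    induction x using QuotientGroup.induction_on
    simp
  map_mul' a b := by
    ext x
    induction x using QuotientGroup.induction_on
    simp only [map_mul]
    rfl

lemma quotientAction_mk (hM : ActInvariant φ ⊤ M) (a : A) (x : G) :
    QuotientGroup.mk' M (φ a x) = quotientAction hM a (QuotientGroup.mk' M x) :=
  rfl

end Quotient

section PSolvable

variable {G G' : Type*} [Group G] [Group G'] {p : ℕ}

lemma IsPSolvableGroup.of_surjective (hp : p.Prime) {f : G →* G'} (hf : Function.Surjective f)
    (hG : IsPSolvableGroup p G) : IsPSolvableGroup p G' := by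
  obtain ⟨n, s, h0, hlast, hnorm, hmono, hfac⟩ := hG
  refine ⟨n, fun i => (s i).map f, by simp only [h0, Subgroup.map_bot],
    by simp only [hlast, Subgroup.map_top_of_surjective f hf], fun i => (hnorm i).map f hf,
    fun i => Subgroup.map_mono (hmono i), fun i => ?_⟩
  have hdvd : ((s i.castSucc).map f).relIndex ((s i.succ).map f) ∣
      (s i.castSucc).relIndex (s i.succ) := by
    rw [← Subgroup.relIndex_comap, Subgroup.comap_map_eq]
    exact Subgroup.relIndex_dvd_of_le_left _ le_sup_left
  refine (hfac i).imp (fun ⟨k, hk⟩ => ?_) (fun hk h => hk (h.trans hdvd))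
  obtain ⟨j, -, hj⟩ := (Nat.dvd_prime_pow hp).1 (hk ▸ hdvd)
  exact ⟨j, hj⟩

lemma IsPSolvableGroup.exists_normal_ne_bot [Nontrivial G] (hG : IsPSolvableGroup p G) :
    ∃ N : Subgroup G, N.Normal ∧ N ≠ ⊥ ∧ (IsPGroup p N ∨ ¬ p ∣ Nat.card N) := by
  obtain ⟨n, s, h0, hlast, hnorm, -, hfac⟩ := hG
  by_contra hno
  have hbot : ∀ i, s i = ⊥ := by
    refine Fin.induction h0 fun i hi => ?_
    by_contra hne
    have hi' := hfac i
    rw [hi, Subgroup.relIndex_bot_left] at hi'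
    exact hno ⟨_, hnorm _, hne, hi'.imp (fun ⟨k, hk⟩ => IsPGroup.of_card hk) id⟩
  exact bot_ne_top ((hbot _).symm.trans hlast)

end PSolvable

section Card

variable {G : Type*} [Group G] {p : ℕ}

lemma card_inf_mul_relIndex (H K : Subgroup G) :
    Nat.card ↥(H ⊓ K) * H.relIndex K = Nat.card K := by
  simpa [Subgroup.relIndex_bot_left] using Subgroup.relIndex_inf_mul_relIndex ⊥ H K

lemma card_quotient_lt_card [Finite G] {M : Subgroup G} [M.Normal] (hM : M ≠ ⊥) :
    Nat.card (G ⧸ M) < Nat.card G := by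
  rw [Subgroup.card_eq_card_quotient_mul_card_subgroup M]
  exact lt_mul_of_one_lt_right Nat.card_pos (M.one_lt_card_iff_ne_bot.2 hM)

lemma not_dvd_card_sup (hp : p.Prime) {S T : Subgroup G} [T.Normal] (hS : ¬ p ∣ Nat.card S)
    (hT : ¬ p ∣ Nat.card T) : ¬ p ∣ Nat.card ↥(S ⊔ T) := by
  rw [← card_inf_mul_relIndex T, inf_of_le_left le_sup_right, Subgroup.relIndex_sup_right]
  exact hp.prime.not_dvd_mul hT fun h => hS (h.trans (T.relIndex_dvd_card S))

lemma iSup_induction_of_normal {ι : Type*} [Finite ι] (P : Subgroup G → Prop) (hbot : P ⊥)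
    (hsup : ∀ S T : Subgroup G, T.Normal → P S → P T → P (S ⊔ T)) (f : ι → Subgroup G)
    (hf : ∀ i, (f i).Normal) (hP : ∀ i, P (f i)) : P (⨆ i, f i) := by
  have := Fintype.ofFinite ι
  rw [← Finset.sup_univ_eq_iSup]
  refine (Finset.sup_induction (p := fun S => S.Normal ∧ P S) ⟨Subgroup.normal_bot, hbot⟩
    (fun S hS T hT => ⟨?_, hsup S T hT.1 hS.2 hT.2⟩) fun i _ => ⟨hf i, hP i⟩).2
  have := hS.1
  have := hT.1
  infer_instance

lemma exists_actInvariant_normal {A : Type*} [Group A] [Finite A] (hp : p.Prime)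
    (φ : A →* MulAut G) {N : Subgroup G} [N.Normal] (hN : N ≠ ⊥)
    (hNp : IsPGroup p N ∨ ¬ p ∣ Nat.card N) :
    ∃ M : Subgroup G, M.Normal ∧ M ≠ ⊥ ∧ ActInvariant φ ⊤ M ∧
      (IsPGroup p M ∨ ¬ p ∣ Nat.card M) := by
  set f : A → Subgroup G := fun a => N.map (φ a).toMonoidHom
  have hf : ∀ a, (f a).Normal := fun a => ‹N.Normal›.map _ (φ a).surjective
  refine ⟨⨆ a, f a, Subgroup.iSup_normal f, fun h => hN ?_, fun a _ x hx => ?_, ?_⟩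
  · rw [← N.map_eq_bot_iff_of_injective (f := (φ 1).toMonoidHom) (φ 1).injective]
    exact le_bot_iff.1 (h ▸ le_iSup f 1)
  · suffices (⨆ c, f c).map (φ a).toMonoidHom ≤ ⨆ c, f c from this ⟨x, hx, rfl⟩
    rw [Subgroup.map_iSup]
    refine iSup_le fun c => le_of_eq_of_le ?_ (le_iSup f (a * c))
    simp only [f, Subgroup.map_map, map_mul]
    rfl
  · refine hNp.imp (fun hNp => ?_) fun hNp => ?_
    · exact iSup_induction_of_normal (IsPGroup p ·) IsPGroup.of_bot
        (fun S T _ hS hT => hS.to_sup_of_normal_right hT) f hf fun a => hNp.map _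
    · exact iSup_induction_of_normal (¬ p ∣ Nat.card ·) (by simpa using hp.ne_one)
        (fun S T _ => not_dvd_card_sup hp) f hf
        fun a => by rwa [Subgroup.card_map_of_injective (φ a).injective]

end Card

lemma Subgroup.eq_bot_of_le_commutator {G : Type*} [Group G] {N S : Subgroup G}
    [Group.IsNilpotent S] (hNS : N ≤ S) (h : N ≤ ⁅N, S⁆) : N = ⊥ := by
  obtain ⟨n, hn⟩ := (Subgroup.isNilpotent_iff_lowerCentralSeries S).1 ‹_›
  have hle : ∀ k, N ≤ S.lowerCentralSeries k := by
    intro k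
    induction k with
    | zero => exact hNS
    | succ k ih => exact h.trans (Subgroup.commutator_mono ih le_rfl)
  exact le_bot_iff.1 (hn ▸ hle n)

section PGroup

open scoped commutatorElement

variable {A G : Type*} [Group A] [Group G] [Finite A] [Finite G] {φ : A →* MulAut G}
  {B : Subgroup A} {H : Subgroup G} {p : ℕ}

open SemidirectProduct in
/-- In `G ⋊ A` the generators `h⁻¹ (b • h)` of `[H, B]` are group commutators `⁅h⁻¹, b⁆`, and
`H ⋊ B` is a nilpotent `p`-group. -/
lemma eq_bot_of_le_actCommutator (hp : p.Prime) (hinv : ActInvariant φ B H)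
    (hH : IsPGroup p H) (hB : IsPGroup p B) (hle : H ≤ actCommutator φ H B) : H = ⊥ := by
  have := Fact.mk hp
  have : Finite (G ⋊[φ] A) := Finite.of_equiv _ equivProd.symm
  set N := H.map (inl : G →* G ⋊[φ] A)
  set T := N ⊔ B.map inr
  have hT : IsPGroup p T := (hH.map _).to_sup_of_normal_left' (hB.map _) <| by
    refine Subgroup.le_normalizer_iff.2 ?_
    rintro _ ⟨b, hb, rfl⟩ _ ⟨h, hh, rfl⟩
    exact ⟨φ b h, hinv b hb h hh, by simp [inl_aut]⟩
  have := hT.isNilpotent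
  have hNT : N ≤ ⁅N, T⁆ := by
    refine Subgroup.map_le_iff_le_comap.2 (hle.trans ((Subgroup.closure_le _).2 ?_))
    rintro _ ⟨h, hh, b, hb, rfl⟩
    have hcomm : inl (h⁻¹ * φ b h) = ⁅(inl h⁻¹ : G ⋊[φ] A), (inr b : G ⋊[φ] A)⁆ := by
      simp [commutatorElement_def, inl_aut, mul_assoc]
    rw [SetLike.mem_coe, Subgroup.mem_comap, hcomm]
    exact Subgroup.commutator_mem_commutator ⟨h⁻¹, inv_mem hh, rfl⟩
      (Subgroup.mem_sup_right ⟨b, hb, rfl⟩)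
  exact (H.map_eq_bot_iff_of_injective inl_injective).1
    (Subgroup.eq_bot_of_le_commutator le_sup_left hNT)

lemma IsGoodAction.le_actFixed_of_isPGroup (hgood : IsGoodAction φ) (hp : p.Prime)
    (hinv : ActInvariant φ B H) (hH : IsPGroup p H) (hB : IsPGroup p B) :
    H ≤ actFixed φ B :=
  actCommutator_eq_bot_iff.1 <| eq_bot_of_le_actCommutator hp (actInvariant_actCommutator hinv)
    (hH.to_le (actCommutator_le hinv)) hB (hgood.actCommutator_actCommutator hinv).ge

end PGroup

section Complement

variable {G : Type*} [Group G] {p : ℕ} {D K H : Subgroup G}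

lemma exists_complement_of_not_dvd_relIndex [Finite G] (hp : p.Prime) (hDK : D ≤ K)
    (hKD : K ≤ Subgroup.normalizer D) (hD : IsPGroup p D) (hidx : ¬ p ∣ D.relIndex K) :
    ∃ H ≤ K, ¬ p ∣ Nat.card H ∧ ∀ k ∈ K, ∃ d ∈ D, ∃ h ∈ H, d * h = k := by
  have := (Subgroup.normal_subgroupOf_iff_le_normalizer hDK).2 hKD
  have := Fact.mk hp
  obtain ⟨a, ha⟩ := hD.exists_card_eq
  have hcop : (Nat.card (D.subgroupOf K)).Coprime (D.subgroupOf K).index := by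
    rw [Nat.card_congr (Subgroup.subgroupOfEquivOfLe hDK).toEquiv, ha]
    exact Nat.Coprime.pow_left _ (hp.coprime_iff_not_dvd.2 hidx)
  obtain ⟨H, hH⟩ := Subgroup.exists_right_complement'_of_coprime hcop
  refine ⟨H.map K.subtype, Subgroup.map_subtype_le H, ?_, fun k hk => ?_⟩
  · rwa [Subgroup.card_map_of_injective K.subtype_injective, ← hH.symm.index_eq_card]
  · obtain ⟨⟨d, h⟩, hdh, -⟩ := hH.existsUnique ⟨k, hk⟩
    exact ⟨d, d.2, h, ⟨h, h.2, rfl⟩, congrArg Subtype.val hdh⟩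

lemma IsPGroup.eq_one_of_not_dvd_orderOf [Fact p.Prime] (hD : IsPGroup p D) {d : G}
    (hd : d ∈ D) (hdp : ¬ p ∣ orderOf d) : d = 1 := by
  by_contra hne
  exact hdp (Subgroup.orderOf_mk d hd ▸ hD.dvd_orderOf (g := ⟨d, hd⟩) (by simpa using hne))

/-- As `D` is central, `K = D × H`, so `H` is the set of `p'`-elements of `K`. -/
lemma mem_iff_not_dvd_orderOf (hp : p.Prime) (hHK : H ≤ K) (hKD : K ≤ Subgroup.centralizer D)
    (hD : IsPGroup p D) (hH : ¬ p ∣ Nat.card H) (hmul : ∀ k ∈ K, ∃ d ∈ D, ∃ h ∈ H, d * h = k)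
    (g : G) : g ∈ H ↔ g ∈ K ∧ ¬ p ∣ orderOf g := by
  have := Fact.mk hp
  have horder : ∀ h ∈ H, ¬ p ∣ orderOf h := fun h hh hdvd =>
    hH (hdvd.trans (Subgroup.orderOf_dvd_natCard H hh))
  refine ⟨fun hg => ⟨hHK hg, horder g hg⟩, fun ⟨hg, hgp⟩ => ?_⟩
  obtain ⟨d, hd, h, hh, rfl⟩ := hmul g hg
  have hcomm : Commute d h := hKD (hHK hh) d hd
  have hcop : (orderOf d).Coprime (orderOf h) := Subgroup.orderOf_mk d hd ▸
    hD.orderOf_coprime (hp.coprime_iff_not_dvd.2 (horder h hh)) ⟨d, hd⟩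
  rw [hcomm.orderOf_mul_eq_mul_orderOf_of_coprime hcop] at hgp
  rwa [hD.eq_one_of_not_dvd_orderOf hd fun hdvd => hgp (hdvd.mul_right _), one_mul]

variable {A : Type*} [Group A] {φ : A →* MulAut G} {B : Subgroup A}

lemma eq_bot_of_le_centralizer_of_le_actFixed [Finite G] (hp : p.Prime)
    (hKinv : ActInvariant φ B K) (hK : K ≤ actCommutator φ K B) (hDK : D ≤ K)
    (hKD : K ≤ Subgroup.centralizer D) (hDfix : D ≤ actFixed φ B) (hD : IsPGroup p D)
    (hidx : ¬ p ∣ D.relIndex K) : D = ⊥ := by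
  have := Fact.mk hp
  obtain ⟨H, hHK, hH, hmul⟩ := exists_complement_of_not_dvd_relIndex hp hDK
    (hKD.trans (Subgroup.centralizer_le_normalizer _)) hD hidx
  have hmem := mem_iff_not_dvd_orderOf hp hHK hKD hD hH hmul
  have hHinv : ActInvariant φ B H := fun b hb h hh => by
    rw [hmem] at hh ⊢
    rw [MulEquiv.orderOf_eq]
    exact ⟨hKinv b hb h hh.1, hh.2⟩
  have hKH : K ≤ H := hK.trans <| (Subgroup.closure_le _).2 <| by
    rintro _ ⟨k, hk, b, hb, rfl⟩
    obtain ⟨d, hd, h, hh, rfl⟩ := hmul k hk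
    have hshift : (d * h)⁻¹ * φ b (d * h) = h⁻¹ * φ b h := by
      rw [map_mul, hDfix hd b hb]; group
    rw [SetLike.mem_coe, hshift]
    exact mul_mem (inv_mem hh) (hHinv b hb h hh)
  exact (Subgroup.eq_bot_iff_forall D).2 fun d hd =>
    hD.eq_one_of_not_dvd_orderOf hd ((hmem d).1 (hKH (hDK hd))).2

end Complement

section Reduction

variable {A G : Type*} [Group A] [Group G] [Finite A] [Finite G] {φ : A →* MulAut G}
  {B : Subgroup A} {p : ℕ}

lemma not_dvd_card_actCommutator_of_quotient (hgood : IsGoodAction φ) (hp : p.Prime)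
    (hB : IsPGroup p B) {M : Subgroup G} [M.Normal] (hMinv : ActInvariant φ ⊤ M)
    (hM : IsPGroup p M ∨ ¬ p ∣ Nat.card M)
    (hquot : ¬ p ∣ Nat.card (actCommutator (quotientAction hMinv) ⊤ B)) :
    ¬ p ∣ Nat.card (actCommutator φ ⊤ B) := by
  set K := actCommutator φ ⊤ B
  have htop : ActInvariant φ B ⊤ := fun _ _ _ _ => Subgroup.mem_top _
  have hidx : ¬ p ∣ M.relIndex K := by
    rwa [← QuotientGroup.ker_mk' M, Subgroup.relIndex_ker, map_actCommutator
      (quotientAction_mk hMinv), Subgroup.map_top_of_surjective _ (QuotientGroup.mk'_surjective M)]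
  have hMK : ¬ p ∣ Nat.card ↥(M ⊓ K) := by
    rcases hM with hMp | hMp
    · have hfix : M ≤ actFixed φ B :=
        hgood.le_actFixed_of_isPGroup hp (fun b _ => hMinv b trivial) hMp hB
      have hcentral : K ≤ Subgroup.centralizer (M ⊓ K) :=
        (actCommutator_top_le_centralizer hfix).trans (Subgroup.centralizer_le inf_le_left)
      have hbot : M ⊓ K = ⊥ := eq_bot_of_le_centralizer_of_le_actFixed hp
        (actInvariant_actCommutator htop) (hgood.actCommutator_actCommutator htop).ge
        inf_le_right hcentral (inf_le_left.trans hfix) (hMp.to_le inf_le_left)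
        (by rwa [Subgroup.inf_relIndex_right])
      rw [hbot, Subgroup.card_bot]
      exact hp.not_dvd_one
    · exact fun h => hMp (h.trans (Subgroup.card_dvd_of_le inf_le_left))
  rw [← card_inf_mul_relIndex M K]
  exact hp.prime.not_dvd_mul hMK hidx

end Reduction

theorem commutator_with_p_subgroup_is_p'_group_general {A G : Type*} [Group A] [Group G]
    [Finite A] [Finite G]
    (φ : A →* MulAut G) (hgood : IsGoodAction φ)
    (p : ℕ) (hp : p.Prime)
    (B : Subgroup A) (hB : IsPGroup p ↥B)
    (hGp : IsPSolvableGroup p G) :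
    ¬ p ∣ Nat.card ↥(actCommutator φ ⊤ B) := by
  refine Finite.induction_subsingleton_or_nontrivial (P := fun G => ∀ [Group G]
    (φ : A →* MulAut G), IsGoodAction φ → IsPSolvableGroup p G →
      ¬ p ∣ Nat.card (actCommutator φ ⊤ B)) G ?_ ?_ φ hgood hGp
  · intro G _ _ _ φ _ _
    rw [Subgroup.card_eq_one.2 (Subsingleton.elim _ _)]
    exact hp.not_dvd_one
  · intro G _ _ ih _ φ hgood hGp
    obtain ⟨N, hN, hNbot, hNp⟩ := hGp.exists_normal_ne_bot
    obtain ⟨M, hM, hMbot, hMinv, hMp⟩ := exists_actInvariant_normal hp φ hNbot hNp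
    exact not_dvd_card_actCommutator_of_quotient hgood hp hB hMinv hMp
      (ih _ (card_quotient_lt_card hMbot) (quotientAction hMinv)
        (hgood.of_surjective (quotientAction_mk hMinv) (QuotientGroup.mk'_surjective M))
        (hGp.of_surjective hp (QuotientGroup.mk'_surjective M)))

/-- Let a finite group `A` act by automorphisms on a finite group `G` with
good action, let `p` be a prime dividing `|A|`, let `B` be a `p`-subgroup of `A`, and suppose
`G` is `p`-solvable.  Then `[G,B]` is a `p'`-group. -/
theorem commutator_with_p_subgroup_is_p'_group {A G : Type*} [Group A] [Group G]
    [Finite A] [Finite G]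
    (φ : A →* MulAut G) (hgood : IsGoodAction φ)
    (p : ℕ) (hp : p.Prime) (hpA : p ∣ Nat.card A)
    (B : Subgroup A) (hB : IsPGroup p ↥B)
    (hGp : IsPSolvableGroup p G) :
    ¬ p ∣ Nat.card ↥(actCommutator φ ⊤ B) :=
  commutator_with_p_subgroup_is_p'_group_general φ hgood p hp B hB hGp
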